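/- arXiv:1801.00827 — 8 statements merged into one kernel-verified Lean document; each statement's English description precedes it below -/
import Mathlib

section
/- Proposition (orbit description of MPS, Proposition 5.1/2.4(2)): Let K be a field, q > 1 an integer, and 𝔞 = (a_1,…,a_q), 𝔟 = (b_1,…,b_q) tuples of positive integers (with a_{q+1} = a_1). A tensor T (with T(i_1,…,i_q) ∈ K for i_j ∈ Fin b_j) lies in MPS(𝔞,𝔟,q) if and only if there exist linear maps f_j : Matrix (Fin a_j) (Fin a_{j+1}) K →ₗ[K] (Fin b_j → K), j = 1,…,q, such that for all multi-indices, T(i_1,…,i_q) = ∑_{p_1 ∈ Fin a_1, …, p_q ∈ Fin a_q} ∏_{j=1}^{q} (f_j (stdBasisMatrix (p_j) (p_{j+1}) 1)) (i_j), i.e. MPS(𝔞,𝔟,q) is exactly the set of tensors (f_1 ⊗ ⋯ ⊗ f_q)(𝔐_{a_1,…,a_q}) where 𝔐_{a_1,…,a_q} = ∑_p e_{p_1 p_2} ⊗ ⋯ ⊗ e_{p_q p_1} is the iterated matrix multiplication tensor. -/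
/-! Both sides sum over the same cyclic index pattern and differ only in the data at site `j`:
a family of matrices `M j i` or a linear map `f j`. A linear map on matrices can be prescribed
freely on the matrix units, so `M j i p r = f j (Matrix.single p r 1) i` matches the two. -/

theorem Matrix.exists_linearMap_single_apply {ι m n R : Type*} [Fintype m] [Fintype n]
    [DecidableEq m] [DecidableEq n] [CommSemiring R] (M : ι → Matrix m n R) :
    ∃ f : Matrix m n R →ₗ[R] (ι → R), ∀ i p r, f (Matrix.single p r 1) i = M i p r :=
  ⟨(Matrix.stdBasis R m n).constr R fun pr i => M i pr.1 pr.2, fun i p r => by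
    rw [← Matrix.stdBasis_eq_single, Module.Basis.constr_basis]⟩

theorem mps_eq_orbit_of_matrix_multiplication_tensor_general
    (K : Type*) [Field K] (q : ℕ) [NeZero q]
    (a b : Fin q → ℕ)
    (T : ((j : Fin q) → Fin (b j)) → K) :
    (∃ M : (j : Fin q) → Fin (b j) → Matrix (Fin (a j)) (Fin (a (j + 1))) K,
      ∀ i : (j : Fin q) → Fin (b j),
        T i = ∑ p : (j : Fin q) → Fin (a j), ∏ j : Fin q, M j (i j) (p j) (p (j + 1))) ↔
    (∃ f : (j : Fin q) → (Matrix (Fin (a j)) (Fin (a (j + 1))) K →ₗ[K] (Fin (b j) → K)),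
      ∀ i : (j : Fin q) → Fin (b j),
        T i = ∑ p : (j : Fin q) → Fin (a j),
          ∏ j : Fin q, f j (Matrix.single (p j) (p (j + 1)) 1) (i j)) := by
  constructor
  · rintro ⟨M, hM⟩
    choose f hf using fun j => Matrix.exists_linearMap_single_apply (M j)
    exact ⟨f, fun i => by simp only [hM i, hf]⟩
  · rintro ⟨f, hf⟩
    exact ⟨fun j i => Matrix.of fun p r => f j (Matrix.single p r 1) i, hf⟩

/-- Proposition 2.4(2) / 5.1(2): orbit description of MPS.
A tensor `T` lies in `MPS(𝔞,𝔟,q)` (i.e. is given by traces of cyclic products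
`M_{i_1,1} ⋯ M_{i_q,q}`, written entrywise as
`∑_p ∏_j (M_{i_j,j})_{p_j, p_{j+1}}`) if and only if it is of the form
`(f_1 ⊗ ⋯ ⊗ f_q)(𝔐_{a_1,…,a_q})` for linear maps `f_j : K^{a_j × a_{j+1}} → K^{b_j}`. -/
theorem mps_eq_orbit_of_matrix_multiplication_tensor
    (K : Type*) [Field K] (q : ℕ) [NeZero q] (hq : 1 < q)
    (a b : Fin q → ℕ) (ha : ∀ j, 0 < a j) (hb : ∀ j, 0 < b j)
    (T : ((j : Fin q) → Fin (b j)) → K) :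
    (∃ M : (j : Fin q) → Fin (b j) → Matrix (Fin (a j)) (Fin (a (j + 1))) K,
      ∀ i : (j : Fin q) → Fin (b j),
        T i = ∑ p : (j : Fin q) → Fin (a j), ∏ j : Fin q, M j (i j) (p j) (p (j + 1))) ↔
    (∃ f : (j : Fin q) → (Matrix (Fin (a j)) (Fin (a (j + 1))) K →ₗ[K] (Fin (b j) → K)),
      ∀ i : (j : Fin q) → Fin (b j),
        T i = ∑ p : (j : Fin q) → Fin (a j),
          ∏ j : Fin q, f j (Matrix.single (p j) (p (j + 1)) 1) (i j)) :=
  mps_eq_orbit_of_matrix_multiplication_tensor_general K q a b T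
end

section
/- Lemma (limit point in the proof of Theorem 4.4): For t ∈ ℂ, t ≠ 0, define four 2×2 complex matrices A_1(t) = t·E_{11}, A_2(t) = (1+t)·E_{12}, A_3(t) = t·E_{21}, A_4(t) = t·E_{22}, where E_{pq} is the standard matrix unit, and let T_t : (Fin 3 → Fin 4) → ℂ be the tensor T_t(i_1,i_2,i_3) = trace(A_{i_1}(t) A_{i_2}(t) A_{i_3}(t)), so T_t ∈ IMPS(2,4,3). Then (1/t²)·T_t converges, as t → 0, to the tensor D defined by D(i_1,i_2,i_3) = 1 if (i_1,i_2,i_3) ∈ {(1,2,3),(3,1,2),(2,3,1),(4,3,2),(2,4,3),(3,2,4)} and D(i_1,i_2,i_3) = 0 otherwise (indices in {1,2,3,4}). In particular D lies in the closure of IMPS(2,4,3). -/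
/-! Each trace `tr(A_a(t) A_b(t) A_c(t))` equals `t²(1 + t) D(a,b,c) + t³ E(a,b,c)`, where
`E` (`hackbuschCorrection`) is the indicator of the cubes `A₁³`, `A₄³`; so
`T_t / t² = (1 + t) D + t E` extends continuously to `t = 0` with value `D`. Since every complex
number is a cube, `IMPS` is closed under scaling, so the `T_t / t²` stay in `IMPS(2,4,3)` and
their limit `D` lies in its closure. -/

open Matrix

/-- The path of 4-tuples of `2 × 2` matrices from the proof of Theorem 4.4:
`A_1(t) = t·E₁₁`, `A_2(t) = (1+t)·E₁₂`, `A_3(t) = t·E₂₁`, `A_4(t) = t·E₂₂`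
(here written with `0`-based indices). -/
noncomputable def hackbuschPath (t : ℂ) : Fin 4 → Matrix (Fin 2) (Fin 2) ℂ :=
  ![t • Matrix.single 0 0 1, (1 + t) • Matrix.single 0 1 1,
    t • Matrix.single 1 0 1, t • Matrix.single 1 1 1]

/-- The limit tensor `D` from the proof of Theorem 4.4, with
`D(i₁,i₂,i₃) = 1` exactly for the (1-based) index triples
`(1,2,3),(3,1,2),(2,3,1),(4,3,2),(2,4,3),(3,2,4)` (here written 0-based). -/
noncomputable def hackbuschTensor : (Fin 3 → Fin 4) → ℂ := fun i =>
  if (i 0, i 1, i 2) ∈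
      ({(0, 1, 2), (2, 0, 1), (1, 2, 0), (3, 2, 1), (1, 3, 2), (2, 1, 3)} :
        Finset (Fin 4 × Fin 4 × Fin 4)) then 1 else 0

open Filter Topology

theorem List.prod_map_smul_eq_pow_smul {R A : Type*} [CommSemiring R] [Semiring A] [Algebra R A]
    (c : R) (l : List A) : (l.map (c • ·)).prod = c ^ l.length • l.prod := by
  induction l with
  | nil => simp
  | cons a l ih =>
    simp only [List.map_cons, List.prod_cons, ih, smul_mul_smul_comm, List.length_cons, pow_succ']

def imps (K n ι : Type*) [Fintype n] [DecidableEq n] [Semiring K] (q : ℕ) :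
    Set ((Fin q → ι) → K) :=
  {T | ∃ M : ι → Matrix n n K, ∀ i, T i = trace (List.ofFn fun j => M (i j)).prod}

section imps

variable {K n ι : Type*} [Fintype n] [DecidableEq n]

theorem imps_three_eq [Semiring K] :
    {T : (Fin 3 → ι) → K | ∃ M : ι → Matrix n n K,
      ∀ i, T i = trace (M (i 0) * M (i 1) * M (i 2))} = imps K n ι 3 := by
  simp [imps, List.ofFn_succ, mul_assoc]

theorem trace_mul_mul_mem_imps [Semiring K] (M : ι → Matrix n n K) :
    (fun i : Fin 3 → ι => trace (M (i 0) * M (i 1) * M (i 2))) ∈ imps K n ι 3 := by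
  rw [← imps_three_eq]
  exact ⟨M, fun _ => rfl⟩

theorem smul_mem_imps [Field K] [IsAlgClosed K] {q : ℕ} (hq : q ≠ 0) (a : K)
    {T : (Fin q → ι) → K} (hT : T ∈ imps K n ι q) : a • T ∈ imps K n ι q := by
  obtain ⟨M, hM⟩ := hT
  obtain ⟨c, rfl⟩ := IsAlgClosed.exists_pow_nat_eq a (Nat.pos_of_ne_zero hq)
  refine ⟨fun j => c • M j, fun i => ?_⟩
  have h := List.prod_map_smul_eq_pow_smul c (List.ofFn fun j => M (i j))
  rw [List.map_ofFn, List.length_ofFn] at h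
  rw [Pi.smul_apply, hM, ← trace_smul, ← h]
  rfl

end imps

noncomputable def hackbuschCorrection : (Fin 3 → Fin 4) → ℂ := fun i =>
  if (i 0, i 1, i 2) ∈ ({(0, 0, 0), (3, 3, 3)} : Finset (Fin 4 × Fin 4 × Fin 4)) then 1 else 0

theorem hackbuschPath_eq (t : ℂ) :
    hackbuschPath t = ![!![t, 0; 0, 0], !![0, 1 + t; 0, 0], !![0, 0; t, 0], !![0, 0; 0, t]] := by
  ext k i j
  fin_cases k <;> fin_cases i <;> fin_cases j <;> simp [hackbuschPath]

theorem trace_hackbuschPath_mul (t : ℂ) (i : Fin 3 → Fin 4) :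
    trace (hackbuschPath t (i 0) * hackbuschPath t (i 1) * hackbuschPath t (i 2)) =
      t ^ 2 * ((1 + t) * hackbuschTensor i + t * hackbuschCorrection i) := by
  simp only [hackbuschTensor, hackbuschCorrection, hackbuschPath_eq]
  generalize i 0 = a, i 1 = b, i 2 = c
  fin_cases a <;> fin_cases b <;> fin_cases c <;>
    simp [Matrix.trace_fin_two, sq] <;> ring

/-- Lemma (limit point in the proof of Theorem 4.4): as `t → 0` (with `t ≠ 0`),
the scaled tensors `(1/t²)·T_t`, where
`T_t(i₁,i₂,i₃) = trace(A_{i₁}(t) A_{i₂}(t) A_{i₃}(t)) ∈ IMPS(2,4,3)`,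
converge to the tensor `D`; in particular `D` lies in the closure of `IMPS(2,4,3)`. -/
theorem tendsto_hackbuschTensor_and_mem_closure_imps :
    Filter.Tendsto
      (fun t : ℂ => fun i : Fin 3 → Fin 4 =>
        (1 / t ^ 2) *
          Matrix.trace (hackbuschPath t (i 0) * hackbuschPath t (i 1) * hackbuschPath t (i 2)))
      (nhdsWithin 0 {0}ᶜ) (nhds hackbuschTensor) ∧
    hackbuschTensor ∈ closure {T : (Fin 3 → Fin 4) → ℂ |
      ∃ M : Fin 4 → Matrix (Fin 2) (Fin 2) ℂ,
        ∀ i : Fin 3 → Fin 4, T i = Matrix.trace (M (i 0) * M (i 1) * M (i 2))} := by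
  have h_eq : (fun t : ℂ => fun i : Fin 3 → Fin 4 => (1 / t ^ 2) *
        trace (hackbuschPath t (i 0) * hackbuschPath t (i 1) * hackbuschPath t (i 2)))
      =ᶠ[𝓝[≠] 0] fun t => (1 + t) • hackbuschTensor + t • hackbuschCorrection := by
    filter_upwards [self_mem_nhdsWithin] with t (ht : t ≠ 0)
    ext i
    simp only [trace_hackbuschPath_mul, Pi.add_apply, Pi.smul_apply, smul_eq_mul]
    field_simp
  have h_lim : Tendsto (fun t : ℂ => (1 + t) • hackbuschTensor + t • hackbuschCorrection)
      (𝓝 0) (𝓝 hackbuschTensor) := by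
    have h_cont : Continuous fun t : ℂ => (1 + t) • hackbuschTensor + t • hackbuschCorrection := by
      fun_prop
    simpa using h_cont.tendsto 0
  have h_tendsto := (h_lim.mono_left nhdsWithin_le_nhds).congr' h_eq.symm
  refine ⟨h_tendsto, mem_closure_of_tendsto h_tendsto (Eventually.of_forall fun t => ?_)⟩
  rw [imps_three_eq]
  exact smul_mem_imps three_ne_zero (1 / t ^ 2) (trace_mul_mul_mem_imps (hackbuschPath t))
end

section
/- Theorem (Theorem 4.4, second part): Let D : (Fin 3 → Fin 4) → ℂ be the tensor with D(i_1,i_2,i_3) = 1 if (i_1,i_2,i_3) ∈ {(1,2,3),(3,1,2),(2,3,1),(4,3,2),(2,4,3),(3,2,4)} and D(i_1,i_2,i_3) = 0 otherwise (indices in {1,2,3,4}). Then D does not lie in MPS((2,2,2),(4,4,4),3); that is, there do NOT exist 2×2 complex matrices M_{i,1}, M_{i,2}, M_{i,3} (i = 1,…,4) with D(i_1,i_2,i_3) = trace(M_{i_1,1} M_{i_2,2} M_{i_3,3}) for all indices. -/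
/-! Write `D(a,b,c) = tr(A_a B_b C_c)` (indices 0-based). For every `a` some support triple
`(a,b,c)` has a pair `(b,c)` occurring in no other support triple, so the `A_a` have a dual
family under the trace pairing: they are linearly independent, hence a basis of the 2×2
matrices; the same holds for the `B_b`. The only support triple ending in `3` is `(2,1,3)`,
so nondegeneracy of the trace form gives `B_b C_3 = 0` for `b ≠ 1`, and `X ↦ X C_3` has rank
at most one. But right multiplication by a nonzero matrix has rank at least two on 2×2
matrices, and `C_3 ≠ 0` since `D(2,1,3) = 1`. -/

open Matrix Submodule

namespace Matrix

variable {K n : Type*} [Field K] [Fintype n]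

theorem linearIndependent_of_trace_mul_eq_ite {ι : Type*} [Fintype ι] [DecidableEq ι]
    {v w : ι → Matrix n n K} (h : ∀ i j, trace (v i * w j) = if i = j then 1 else 0) :
    LinearIndependent K v := by
  rw [Fintype.linearIndependent_iff]
  intro g hg j
  simpa [Finset.sum_mul, trace_sum, h] using congrArg (fun X => trace (X * w j)) hg

theorem eq_zero_of_trace_mul_eq_zero {ι : Type*} {v : ι → Matrix n n K}
    (hv : span K (Set.range v) = ⊤) {X : Matrix n n K} (h : ∀ i, trace (v i * X) = 0) :
    X = 0 := by
  have hker : span K (Set.range v) ≤ LinearMap.ker (traceLinearMap n K K ∘ₗ .mulRight K X) :=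
    span_le.mpr (by rintro _ ⟨i, rfl⟩; exact h i)
  rw [hv] at hker
  refine ext_iff_trace_mul_left.mpr fun Y => ?_
  simpa using hker (mem_top (x := Y))

theorem exists_mul_notMem_span_singleton {m m' : Type*} [DecidableEq n] [DecidableEq m']
    [Nontrivial m'] {C : Matrix n m K} (hC : C ≠ 0) (N : Matrix m' m K) :
    ∃ X : Matrix m' n K, X * C ∉ K ∙ N := by
  obtain ⟨p, q, hpq⟩ : ∃ p q, C p q ≠ 0 := by
    by_contra! h
    exact hC (Matrix.ext h)
  obtain ⟨i, i', hii'⟩ := exists_pair_ne m'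
  by_contra! hspan
  -- `single i p 1 * C` carries row `p` of `C` in row `i` and zeros elsewhere.
  obtain ⟨a, ha⟩ := mem_span_singleton.mp (hspan (single i p 1))
  obtain ⟨b, hb⟩ := mem_span_singleton.mp (hspan (single i' p 1))
  have e1 := congrFun (congrFun ha i) q
  have e2 := congrFun (congrFun ha i') q
  have e3 := congrFun (congrFun hb i') q
  simp only [smul_apply, smul_eq_mul, single_mul_apply_same,
    single_mul_apply_of_ne (h := hii'.symm), one_mul, mul_eq_zero] at e1 e2 e3
  rcases e2 with rfl | hN
  · exact hpq (by simpa using e1.symm)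
  · exact hpq (by simpa [hN] using e3.symm)

end Matrix

/-- Theorem 4.4 (second part): the tensor `D` does not lie in
`MPS((2,2,2),(4,4,4),3)`. -/
theorem hackbuschTensor_not_mem_mps :
    ¬ ∃ M₁ M₂ M₃ : Fin 4 → Matrix (Fin 2) (Fin 2) ℂ,
      ∀ i : Fin 3 → Fin 4,
        hackbuschTensor i = Matrix.trace (M₁ (i 0) * M₂ (i 1) * M₃ (i 2)) := by
  rintro ⟨A, B, C, hABC⟩
  have hD (a b c : Fin 4) : trace (A a * (B b * C c)) = hackbuschTensor ![a, b, c] := by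
    rw [hABC, ← Matrix.mul_assoc]; rfl
  have hcard : Fintype.card (Fin 4) = Module.finrank ℂ (Matrix (Fin 2) (Fin 2) ℂ) := by
    simp [Module.finrank_matrix]
  have hA : LinearIndependent ℂ A :=
    linearIndependent_of_trace_mul_eq_ite (w := ![B 1 * C 2, B 2 * C 0, B 0 * C 1, B 2 * C 1])
      fun i j => by fin_cases i <;> fin_cases j <;> simp [hD, hackbuschTensor]
  have hB : LinearIndependent ℂ B :=
    linearIndependent_of_trace_mul_eq_ite (w := ![C 1 * A 2, C 2 * A 0, C 0 * A 1, C 2 * A 1])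
      fun i j => by
        fin_cases i <;> fin_cases j <;> simp [trace_mul_cycle', hD, hackbuschTensor]
  have hBC (j : Fin 4) (hj : j ≠ 1) : B j * C 3 = 0 := by
    refine eq_zero_of_trace_mul_eq_zero
      (hA.span_eq_top_of_card_eq_finrank' hcard) fun i => ?_
    fin_cases i <;> fin_cases j <;> simp [hD, hackbuschTensor] at hj ⊢
  have hC : C 3 ≠ 0 := by
    intro h0
    simpa [h0, hackbuschTensor] using hD 2 1 3
  have hrank : span ℂ (Set.range B) ≤ (ℂ ∙ B 1 * C 3).comap (LinearMap.mulRight ℂ (C 3)) := by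
    refine span_le.mpr ?_
    rintro _ ⟨j, rfl⟩
    by_cases hj : j = 1
    · subst hj; exact mem_span_singleton_self _
    · simp [hBC j hj]
  obtain ⟨X, hX⟩ := exists_mul_notMem_span_singleton (m' := Fin 2) hC (B 1 * C 3)
  exact hX (hrank (hB.span_eq_top_of_card_eq_finrank' hcard ▸ mem_top))
end

section
/- Lemma (intermediate claim in the proof of Theorem 4.4): Let D : (Fin 3 → Fin 4) → ℂ be the tensor with D(i_1,i_2,i_3) = 1 if (i_1,i_2,i_3) ∈ {(1,2,3),(3,1,2),(2,3,1),(4,3,2),(2,4,3),(3,2,4)} and 0 otherwise (indices in {1,2,3,4}). Suppose M_{i,1}, M_{i,2}, M_{i,3} (i = 1,…,4) are 2×2 complex matrices satisfying D(i_1,i_2,i_3) = trace(M_{i_1,1} M_{i_2,2} M_{i_3,3}) for all indices. Then for each j ∈ {1,2,3}, the four matrices M_{1,j}, M_{2,j}, M_{3,j}, M_{4,j} are linearly independent, i.e. they span the 4-dimensional space Matrix (Fin 2) (Fin 2) ℂ (equivalently, the associated linear maps L_j : Matrix (Fin 2) (Fin 2) ℂ → ℂ⁴ are isomorphisms). -/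
theorem LinearIndependent.of_apply_eq_ite {R M ι : Type*} [Semiring R] [AddCommMonoid M]
    [Module R M] [DecidableEq ι] {f : ι → M} (φ : ι → M →ₗ[R] R)
    (hφ : ∀ i k, φ k (f i) = if i = k then 1 else 0) : LinearIndependent R f := by
  have hf : LinearMap.pi φ ∘ f = fun i ↦ Pi.single i 1 := by
    ext i k
    simp [hφ, Pi.single_apply, eq_comm]
  exact .of_comp (LinearMap.pi φ) (hf ▸ Pi.linearIndependent_single_one ι R)

section TraceRepresentation

variable {R ι n : Type*} [CommRing R] [Fintype n]

def IsTraceRepresentation (T : (Fin 3 → ι) → R) (M₁ M₂ M₃ : ι → Matrix n n R) : Prop :=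
  ∀ i : Fin 3 → ι, T i = (M₁ (i 0) * M₂ (i 1) * M₃ (i 2)).trace

variable {T : (Fin 3 → ι) → R} {M₁ M₂ M₃ : ι → Matrix n n R}

theorem IsTraceRepresentation.rotate (hM : IsTraceRepresentation T M₁ M₂ M₃)
    (hT : ∀ i, T (i ∘ finRotate 3) = T i) : IsTraceRepresentation T M₂ M₃ M₁ := by
  intro i
  calc T i = T (i ∘ (finRotate 3).symm) := by
        simpa [Function.comp_def] using hT (i ∘ (finRotate 3).symm)
    _ = (M₁ (i 2) * M₂ (i 0) * M₃ (i 1)).trace := by rw [hM]; rfl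
    _ = (M₂ (i 0) * M₃ (i 1) * M₁ (i 2)).trace := by rw [← Matrix.trace_mul_cycle]

theorem IsTraceRepresentation.linearIndependent [DecidableEq ι]
    (hM : IsTraceRepresentation T M₁ M₂ M₃) (a b : ι → ι)
    (hab : ∀ i k, T ![i, a k, b k] = if i = k then 1 else 0) : LinearIndependent R M₁ := by
  refine .of_apply_eq_ite (fun k ↦ Matrix.traceLinearMap n R R ∘ₗ
    LinearMap.mulRight R (M₂ (a k) * M₃ (b k))) fun i k ↦ ?_
  simpa [hM ![i, a k, b k], Matrix.mul_assoc] using hab i k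

end TraceRepresentation

theorem hackbuschTensor_comp_finRotate (i : Fin 3 → Fin 4) :
    hackbuschTensor (i ∘ finRotate 3) = hackbuschTensor i := by
  show (if (i 1, i 2, i 0) ∈ _ then (1 : ℂ) else 0) = if (i 0, i 1, i 2) ∈ _ then 1 else 0
  congr 1
  generalize i 0 = x, i 1 = y, i 2 = z
  revert x y z
  decide

theorem hackbuschTensor_slice (i k : Fin 4) :
    hackbuschTensor ![i, ![1, 2, 0, 2] k, ![2, 0, 1, 1] k] = if i = k then 1 else 0 := by
  unfold hackbuschTensor
  congr 1
  revert i k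
  decide

/-- Intermediate claim in the proof of Theorem 4.4: if the tensor `D` is represented
as an MPS by matrices `M_{i,j}` (`j = 1,2,3`, `i = 1,…,4`), then for each `j` the four
matrices `M_{1,j},…,M_{4,j}` are linearly independent (equivalently, they span the
4-dimensional space of `2 × 2` matrices, i.e. the associated linear maps
`L_j : ℂ^{2×2} → ℂ⁴` are isomorphisms). -/
theorem mps_representation_of_hackbuschTensor_linearIndependent
    (M₁ M₂ M₃ : Fin 4 → Matrix (Fin 2) (Fin 2) ℂ)
    (h : ∀ i : Fin 3 → Fin 4,
      hackbuschTensor i = Matrix.trace (M₁ (i 0) * M₂ (i 1) * M₃ (i 2))) :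
    LinearIndependent ℂ M₁ ∧ LinearIndependent ℂ M₂ ∧ LinearIndependent ℂ M₃ := by
  have h₁ : IsTraceRepresentation hackbuschTensor M₁ M₂ M₃ := h
  have h₂ := h₁.rotate hackbuschTensor_comp_finRotate
  have h₃ := h₂.rotate hackbuschTensor_comp_finRotate
  exact ⟨h₁.linearIndependent _ _ hackbuschTensor_slice,
    h₂.linearIndependent _ _ hackbuschTensor_slice, h₃.linearIndependent _ _ hackbuschTensor_slice⟩
end

section
/- Proposition (Example 5.3, rank characterization): Let r, k be positive integers. A k×k complex matrix T lies in IMPS(r,k,2) if and only if T is symmetric (Tᵀ = T) and has rank at most r². -/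
/-!
`T` is the Gram matrix of `M₁, …, M_k` for the symmetric bilinear form `(X, Y) ↦ tr (X Y)` on
`r × r` matrices. Expanding every `M_i` in the matrix units writes it as `X G Xᵀ`, with `X` the
`k × r²` matrix of coordinates and `G` the Gram matrix of the matrix units, which is the permutation
matrix of `(a, b) ↦ (b, a)`; hence `T` is symmetric of rank at most `r²`.

Conversely, over `ℂ` a symmetric matrix of rank at most `m` factors as `C Cᵀ` with `m` columns:
diagonalise it by congruence and take square roots of the diagonal. Factor both `T = C Cᵀ` and the
invertible `G = D Dᵀ` this way; then `X = C D⁻¹` gives `X G Xᵀ = C Cᵀ = T`.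
-/

open Matrix

namespace Matrix

variable {R K ι κ σ n : Type*} [Fintype n]

def traceGram [CommSemiring R] (M : ι → Matrix n n R) : Matrix ι ι R :=
  of fun i j => trace (M i * M j)

section CommSemiring

variable [CommSemiring R]

theorem traceGram_isSymm (M : ι → Matrix n n R) : (traceGram M).IsSymm :=
  ext fun i j => trace_mul_comm (M j) (M i)

theorem traceGram_sum_smul [Fintype κ] (X : Matrix ι κ R) (F : κ → Matrix n n R) :
    traceGram (fun i => ∑ p, X i p • F p) = X * traceGram F * Xᵀ := by
  ext i j
  simp only [traceGram, of_apply, Finset.sum_mul, Finset.mul_sum, smul_mul_smul_comm, trace_sum,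
    trace_smul, smul_eq_mul, mul_apply, transpose_apply]
  exact Finset.sum_congr rfl fun p _ => Finset.sum_congr rfl fun q _ => by ring

theorem traceGram_single [DecidableEq n] :
    traceGram (fun p : n × n => single p.1 p.2 (1 : R)) =
      Equiv.Perm.permMatrix R (Equiv.prodComm n n) := by
  ext ⟨a, b⟩ ⟨c, d⟩
  simp [traceGram, PEquiv.toMatrix_apply, trace_single_mul, single_apply, eq_comm]

theorem eq_sum_smul_single [DecidableEq n] (A : Matrix n n R) :
    A = ∑ p : n × n, A p.1 p.2 • single p.1 p.2 (1 : R) := by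
  simp only [Fintype.sum_prod_type, smul_single, smul_eq_mul, mul_one]
  exact matrix_eq_sum_single A

theorem exists_mul_transpose_eq_of_card_le [Fintype σ] [Fintype κ] (C : Matrix ι σ R)
    (h : Fintype.card σ ≤ Fintype.card κ) : ∃ C' : Matrix ι κ R, C' * C'ᵀ = C * Cᵀ := by
  classical
  obtain ⟨f⟩ := Function.Embedding.nonempty_of_card_le h
  refine ⟨C * (1 : Matrix κ κ R).submatrix f id, ?_⟩
  rw [transpose_mul, Matrix.mul_assoc, ← Matrix.mul_assoc _ _ Cᵀ, transpose_submatrix,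
    transpose_one, ← submatrix_mul _ _ _ _ _ Function.bijective_id, Matrix.mul_one,
    submatrix_one_embedding, Matrix.one_mul]

end CommSemiring

section Field

variable [Field K] [Fintype ι]

theorem rank_traceGram_le (M : ι → Matrix n n K) :
    (traceGram M).rank ≤ Fintype.card n ^ 2 := by
  classical
  let X : Matrix ι (n × n) K := of fun i p => M i p.1 p.2
  have hM : traceGram M = X * traceGram (fun p : n × n => single p.1 p.2 (1 : K)) * Xᵀ := by
    rw [← traceGram_sum_smul]
    exact congrArg traceGram (funext fun i => eq_sum_smul_single (M i))
  calc (traceGram M).rank ≤ X.rank := by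
        rw [hM]; exact (rank_mul_le_left _ _).trans (rank_mul_le_left _ _)
    _ ≤ Fintype.card (n × n) := rank_le_card_width X
    _ = Fintype.card n ^ 2 := by rw [Fintype.card_prod, sq]

theorem IsSymm.exists_eq_mul_diagonal_mul_transpose [DecidableEq ι] [Invertible (2 : K)]
    {T : Matrix ι ι K} (hT : T.IsSymm) :
    ∃ (P : Matrix ι ι K) (d : ι → K), IsUnit P.det ∧ T = P * diagonal d * Pᵀ := by
  obtain ⟨v, hv⟩ := LinearMap.BilinForm.exists_orthogonal_basis
    (LinearMap.BilinForm.isSymm_iff.mp (isSymm_toBilin'_iff_isSymm.mpr hT))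
  let w := v.reindex ((finCongr (Module.finrank_fintype_fun_eq_card K)).trans
    (Fintype.equivFin ι).symm)
  let Q := (Pi.basisFun K ι).toMatrix w
  have hQ : Qᵀ * T * Q = diagonal fun i => T.toBilin' (w i) (w i) := by
    have := LinearMap.BilinForm.toMatrix_mul_basis_toMatrix (Pi.basisFun K ι) w T.toBilin'
    rw [LinearMap.BilinForm.toMatrix_basisFun, LinearMap.BilinForm.toMatrix'_toBilin'] at this
    rw [this]
    ext i j
    rw [LinearMap.BilinForm.toMatrix_apply]
    rcases eq_or_ne i j with rfl | hij
    · simp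
    · rw [diagonal_apply_ne _ hij]
      simpa [w] using hv (by simpa using hij)
  have : Invertible Q := (Pi.basisFun K ι).invertibleToMatrix w
  refine ⟨Q⁻¹ᵀ, fun i => T.toBilin' (w i) (w i),
    by rw [det_transpose]; exact isUnit_det_of_invertible _, ?_⟩
  rw [← hQ, transpose_transpose, transpose_nonsing_inv]
  simp [Matrix.mul_assoc]

theorem exists_diagonal_eq_mul_transpose [DecidableEq ι] [DecidableEq K] [IsAlgClosed K]
    (d : ι → K) : ∃ E : Matrix ι {i // d i ≠ 0} K, diagonal d = E * Eᵀ := by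
  choose g hg using fun i => IsAlgClosed.exists_eq_mul_self (d i)
  refine ⟨(diagonal g).submatrix id Subtype.val, ?_⟩
  ext i j
  simp only [mul_apply, submatrix_apply, id, transpose_apply, diagonal_apply]
  rw [← Finset.subtype_univ, Finset.sum_subtype_eq_sum_filter
    (f := fun k => (if i = k then g i else 0) * (if j = k then g j else 0))]
  simp only [ite_mul, zero_mul, Finset.sum_ite_eq, Finset.mem_filter]
  rcases eq_or_ne i j with rfl | hij
  · by_cases hi : d i = 0 <;> simp [hi, ← hg]
  · simp [hij, hij.symm]

theorem IsSymm.exists_eq_mul_transpose_of_rank_le [IsAlgClosed K] [Invertible (2 : K)]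
    [Fintype κ] {T : Matrix ι ι K} (hT : T.IsSymm) (h : T.rank ≤ Fintype.card κ) :
    ∃ C : Matrix ι κ K, T = C * Cᵀ := by
  classical
  obtain ⟨P, d, hP, rfl⟩ := hT.exists_eq_mul_diagonal_mul_transpose
  obtain ⟨E, hE⟩ := exists_diagonal_eq_mul_transpose d
  rw [rank_mul_eq_left_of_isUnit_det _ _ (by rwa [det_transpose]),
    rank_mul_eq_right_of_isUnit_det _ _ hP, rank_diagonal] at h
  obtain ⟨C, hC⟩ := exists_mul_transpose_eq_of_card_le (P * E) h
  refine ⟨C, ?_⟩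
  rw [hC, hE, transpose_mul, Matrix.mul_assoc, Matrix.mul_assoc, Matrix.mul_assoc]

theorem IsSymm.exists_traceGram_eq [IsAlgClosed K] [Invertible (2 : K)] {T : Matrix ι ι K}
    (hT : T.IsSymm) (h : T.rank ≤ Fintype.card n ^ 2) :
    ∃ M : ι → Matrix n n K, traceGram M = T := by
  classical
  obtain ⟨C, rfl⟩ :=
    hT.exists_eq_mul_transpose_of_rank_le (κ := n × n) (by rwa [Fintype.card_prod, ← sq])
  obtain ⟨D, hD⟩ := IsSymm.exists_eq_mul_transpose_of_rank_le
    (traceGram_isSymm fun p : n × n => single p.1 p.2 (1 : K)) (rank_le_card_width _)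
  have hDu : IsUnit D.det := by
    have hdet := congrArg det hD
    rw [traceGram_single, det_permutation, det_mul, det_transpose] at hdet
    exact isUnit_of_mul_isUnit_left
      (hdet ▸ (Units.isUnit _).map (Int.castRingHom K) : IsUnit (D.det * D.det))
  refine ⟨fun i => ∑ p, (C * D⁻¹) i p • single p.1 p.2 (1 : K), ?_⟩
  rw [traceGram_sum_smul, hD, transpose_mul, transpose_nonsing_inv]
  simp only [Matrix.mul_assoc, nonsing_inv_mul_cancel_left _ _ hDu,
    mul_nonsing_inv_cancel_left _ _ ((det_transpose D).symm ▸ hDu)]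

end Field

end Matrix

theorem imps_two_iff_symmetric_and_rank_le_general (r k : ℕ)
    (T : Matrix (Fin k) (Fin k) ℂ) :
    (∃ M : Fin k → Matrix (Fin r) (Fin r) ℂ,
      ∀ i j : Fin k, T i j = Matrix.trace (M i * M j)) ↔
    (Tᵀ = T ∧ T.rank ≤ r ^ 2) := by
  have hGram (M : Fin k → Matrix (Fin r) (Fin r) ℂ) :
      (∀ i j, T i j = trace (M i * M j)) ↔ traceGram M = T := by
    rw [← Matrix.ext_iff]
    exact forall₂_congr fun i j => eq_comm
  simp only [hGram]
  constructor
  · rintro ⟨M, rfl⟩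
    exact ⟨traceGram_isSymm M, by simpa using rank_traceGram_le M⟩
  · rintro ⟨hsym, hrank⟩
    exact IsSymm.exists_traceGram_eq hsym (by simpa using hrank)

/-- Example 5.3 (rank characterization): a `k × k` complex matrix `T` lies in
`IMPS(r,k,2)` if and only if `T` is symmetric and has rank at most `r²`. -/
theorem imps_two_iff_symmetric_and_rank_le (r k : ℕ) (hr : 0 < r) (hk : 0 < k)
    (T : Matrix (Fin k) (Fin k) ℂ) :
    (∃ M : Fin k → Matrix (Fin r) (Fin r) ℂ,
      ∀ i j : Fin k, T i j = Matrix.trace (M i * M j)) ↔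
    (Tᵀ = T ∧ T.rank ≤ r ^ 2) :=
  imps_two_iff_symmetric_and_rank_le_general r k T
end

section
/- Theorem (Section 5.2): The set IMPS(2,2,3) ⊆ ((Fin 3 → Fin 2) → ℂ) equals the set of symmetric tensors; that is, a tensor T : (Fin 3 → Fin 2) → ℂ satisfies T(i_1,i_2,i_3) = trace(M_{i_1} M_{i_2} M_{i_3}) for some 2×2 complex matrices M_1, M_2 if and only if T is invariant under all permutations of its three indices: T(i_1,i_2,i_3) = T(i_{σ(1)},i_{σ(2)},i_{σ(3)}) for every permutation σ of {1,2,3}. -/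
/-!
Every permutation of a word of length three in two letters is a cyclic rotation of it, so the
cyclicity of the trace makes `i ↦ tr (M (i 0) * M (i 1) * M (i 2))` symmetric. Conversely, a
symmetric tensor is determined by its values `t₀, t₁, t₂, t₃` at `000, 001, 011, 111`. For
`2 × 2` matrices, Cayley–Hamilton turns `tr A³, tr A²B, tr AB², tr B³` into polynomials in
`tr A, tr B, det A, det B, tr AB`, and these five invariants can be prescribed freely. Taking
`tr B = 1` leaves the single equation `t₃ s³ - 3 t₂ s² + 3 t₁ s - t₀ = 0` for `s = tr A`, which
has a root over `ℂ` unless `t₃ = 0`; then exchanging `A` and `B` leaves an equation with root `0`.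
-/

open Matrix Polynomial

def IsSymmetricTensor {ι α β : Type*} (T : (ι → α) → β) : Prop :=
  ∀ (σ : Equiv.Perm ι) (i : ι → α), T (i ∘ σ) = T i

lemma exists_finRotate_pow_comp_eq_comp_perm (σ : Equiv.Perm (Fin 3)) (i : Fin 3 → Fin 2) :
    ∃ k : Fin 3, i ∘ σ = i ∘ ⇑(finRotate 3 ^ (k : ℕ)) := by
  revert σ i
  decide

lemma exists_perm_comp_eq_sorted (i : Fin 3 → Fin 2) :
    ∃ σ : Equiv.Perm (Fin 3),
      i ∘ σ = ![0, 0, 0] ∨ i ∘ σ = ![0, 0, 1] ∨ i ∘ σ = ![0, 1, 1] ∨ i ∘ σ = ![1, 1, 1] := by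
  revert i
  decide

lemma IsSymmetricTensor.eq_of_eq_sorted {β : Type*} {T T' : (Fin 3 → Fin 2) → β}
    (hT : IsSymmetricTensor T) (hT' : IsSymmetricTensor T')
    (h₀ : T ![0, 0, 0] = T' ![0, 0, 0]) (h₁ : T ![0, 0, 1] = T' ![0, 0, 1])
    (h₂ : T ![0, 1, 1] = T' ![0, 1, 1]) (h₃ : T ![1, 1, 1] = T' ![1, 1, 1]) : T = T' := by
  funext i
  obtain ⟨σ, hσ | hσ | hσ | hσ⟩ := exists_perm_comp_eq_sorted i <;>
    rw [← hT σ, ← hT' σ, hσ] <;> assumption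

section TraceTensor

variable {α n R : Type*} [Fintype n] [CommRing R]

def traceTensor (M : α → Matrix n n R) (i : Fin 3 → α) : R :=
  trace (M (i 0) * M (i 1) * M (i 2))

lemma traceTensor_comp_finRotate_pow (M : α → Matrix n n R) (i : Fin 3 → α) (k : ℕ) :
    traceTensor M (i ∘ ⇑(finRotate 3 ^ k)) = traceTensor M i := by
  induction k with
  | zero => rfl
  | succ k ih =>
    rw [pow_succ, Equiv.Perm.coe_mul, ← Function.comp_assoc, ← ih]
    exact trace_mul_cycle _ _ _

lemma isSymmetricTensor_traceTensor (M : Fin 2 → Matrix n n R) :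
    IsSymmetricTensor (traceTensor M) := by
  intro σ i
  obtain ⟨k, hk⟩ := exists_finRotate_pow_comp_eq_comp_perm σ i
  rw [hk, traceTensor_comp_finRotate_pow]

end TraceTensor

namespace Matrix

section CommRing

variable {R : Type*} [CommRing R]

lemma mul_self_fin_two (A : Matrix (Fin 2) (Fin 2) R) : A * A = A.trace • A - A.det • 1 := by
  ext i j
  fin_cases i <;> fin_cases j <;>
    simp [trace_fin_two, det_fin_two, mul_apply, Fin.sum_univ_two] <;> ring

lemma trace_mul_self_fin_two (A : Matrix (Fin 2) (Fin 2) R) :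
    trace (A * A) = trace A ^ 2 - 2 * det A := by
  rw [mul_self_fin_two, trace_sub, trace_smul, trace_smul, trace_one, Fintype.card_fin,
    smul_eq_mul, smul_eq_mul]
  push_cast
  ring

lemma trace_mul_self_mul_fin_two (A B : Matrix (Fin 2) (Fin 2) R) :
    trace (A * A * B) = trace A * trace (A * B) - det A * trace B := by
  rw [mul_self_fin_two, sub_mul, trace_sub, smul_mul_assoc, smul_mul_assoc, one_mul,
    trace_smul, trace_smul, smul_eq_mul, smul_eq_mul]

end CommRing

variable {K : Type*} [Field K] [IsAlgClosed K]

lemma exists_fin_two_trace_det_trace_mul (tA tB dA dB p : K) :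
    ∃ A B : Matrix (Fin 2) (Fin 2) K, A.trace = tA ∧ B.trace = tB ∧ A.det = dA ∧ B.det = dB ∧
      (A * B).trace = p := by
  obtain ⟨s, hs⟩ := IsAlgClosed.exists_root (X ^ 2 - C (tA + tB) * X + C (dA + dB + p))
    (ne_of_eq_of_ne (by compute_degree!) (by decide : (2 : WithBot ℕ) ≠ 0))
  simp only [IsRoot, eval_add, eval_sub, eval_mul, eval_pow, eval_X, eval_C] at hs
  -- `A` is the companion matrix of `X² - tA X + dA`; the root `s` makes `det B = dB`.
  refine ⟨!![0, -dA; 1, tA], !![tB - s, p + dA - tA * s; 1, s], ?_, ?_, ?_, ?_, ?_⟩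
  all_goals simp only [trace_fin_two_of, det_fin_two_of, mul_fin_two]
  · ring
  · ring
  · ring
  · linear_combination -hs
  · ring

variable [CharZero K]

lemma exists_fin_two_trace_cubes_of_root {t₀ t₁ t₂ t₃ s : K}
    (hs : t₃ * s ^ 3 - 3 * t₂ * s ^ 2 + 3 * t₁ * s - t₀ = 0) :
    ∃ A B : Matrix (Fin 2) (Fin 2) K, trace (A * A * A) = t₀ ∧ trace (A * A * B) = t₁ ∧
      trace (A * B * B) = t₂ ∧ trace (B * B * B) = t₃ := by
  -- With `tr A = s` and `tr B = 1`, the equations for `t₃`, `t₂`, `t₁` determine `det B`,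
  -- `tr AB` and `det A` in turn; the equation for `t₀` is then `hs`.
  set dB := (1 - t₃) / 3
  obtain ⟨A, B, hA, hB, hdA, hdB, hAB⟩ :=
    exists_fin_two_trace_det_trace_mul s 1 (s * (t₂ + dB * s) - t₁) dB (t₂ + dB * s)
  refine ⟨A, B, ?_, ?_, ?_, ?_⟩
  · rw [trace_mul_self_mul_fin_two, trace_mul_self_fin_two, hA, hdA]
    linear_combination hs
  · rw [trace_mul_self_mul_fin_two, hA, hAB, hdA, hB]
    ring
  · rw [mul_assoc, trace_mul_comm, trace_mul_self_mul_fin_two, trace_mul_comm, hA, hAB, hdB, hB]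
    ring
  · rw [trace_mul_self_mul_fin_two, trace_mul_self_fin_two, hB, hdB]
    ring

lemma exists_fin_two_trace_cubes (t₀ t₁ t₂ t₃ : K) :
    ∃ A B : Matrix (Fin 2) (Fin 2) K, trace (A * A * A) = t₀ ∧ trace (A * A * B) = t₁ ∧
      trace (A * B * B) = t₂ ∧ trace (B * B * B) = t₃ := by
  by_cases h₃ : t₃ = 0
  · obtain ⟨A, B, hA, hAB, hBA, hB⟩ :=
      exists_fin_two_trace_cubes_of_root (t₀ := t₃) (t₁ := t₂) (t₂ := t₁) (t₃ := t₀) (s := 0)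
        (by simp [h₃])
    refine ⟨B, A, hB, ?_, ?_, hA⟩
    · rw [trace_mul_cycle, hBA]
    · rw [← hAB, trace_mul_cycle A A B]
  · obtain ⟨s, hs⟩ := IsAlgClosed.exists_root
      (C t₃ * X ^ 3 + C (-(3 * t₂)) * X ^ 2 + C (3 * t₁) * X + C (-t₀))
      (by rw [degree_cubic h₃]; decide)
    simp only [IsRoot, eval_add, eval_mul, eval_pow, eval_X, eval_C] at hs
    exact exists_fin_two_trace_cubes_of_root (s := s) (by linear_combination hs)

end Matrix

/-- Section 5.2: `IMPS(2,2,3)` equals the set of symmetric tensors in `(ℂ²)^{⊗3}`: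
a tensor `T : (Fin 3 → Fin 2) → ℂ` is of the form
`T(i₁,i₂,i₃) = trace(M_{i₁} M_{i₂} M_{i₃})` for some `2 × 2` complex matrices
`M₁, M₂` if and only if `T` is invariant under all permutations of its three
indices. -/
theorem imps_two_two_three_eq_symmetric_tensors (T : (Fin 3 → Fin 2) → ℂ) :
    (∃ M : Fin 2 → Matrix (Fin 2) (Fin 2) ℂ,
      ∀ i : Fin 3 → Fin 2, T i = Matrix.trace (M (i 0) * M (i 1) * M (i 2))) ↔
    (∀ (σ : Equiv.Perm (Fin 3)) (i : Fin 3 → Fin 2), T (i ∘ σ) = T i) := by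
  constructor
  · rintro ⟨M, hM⟩
    have hT : T = traceTensor M := funext hM
    exact hT ▸ isSymmetricTensor_traceTensor M
  · intro hT
    obtain ⟨A, B, h₀, h₁, h₂, h₃⟩ :=
      exists_fin_two_trace_cubes (T ![0, 0, 0]) (T ![0, 0, 1]) (T ![0, 1, 1]) (T ![1, 1, 1])
    exact ⟨![A, B], congrFun (IsSymmetricTensor.eq_of_eq_sorted hT
      (isSymmetricTensor_traceTensor ![A, B]) h₀.symm h₁.symm h₂.symm h₃.symm)⟩
end

section
/- Corollary (Section 5.2): The set IMPS(2,2,3) is a closed subset of the tensor space (Fin 3 → Fin 2) → ℂ with its standard topology; indeed it is a 4-dimensional linear subspace (the space of symmetric tensors). -/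
/-!
By cyclicity of the trace, `trace (M (i 0) * M (i 1) * M (i 2))` depends only on the number of
indices equal to `1`, so every tensor in `IMPS(2,2,3)` is symmetric and is determined by the
four values `tr A³, tr A²B, tr AB², tr B³` with `A = M 0`, `B = M 1`. Conversely every
`(w, x, y, z)` is attained by `A = !![1, a; b, 0]`, `B = !![t, c; d, 0]`: the conditions on
`(t, a, b, c, d)` amount to `t` being a root of the cubic `w t³ - 3x t² + 3y t - z` and
`(a X + c) (b X + d)` being a prescribed quadratic, both solvable over an algebraically closed
field. Hence `IMPS(2,2,3)` is the 4-dimensional space of symmetric tensors, and closed as a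
finite-dimensional subspace.
-/

open Matrix

theorem exists_cubic_eq_zero {K : Type*} [Field K] [IsAlgClosed K] {a b c : K} (d : K)
    (h : a ≠ 0 ∨ b ≠ 0 ∨ c ≠ 0) : ∃ t, a * t ^ 3 + b * t ^ 2 + c * t + d = 0 := by
  let P : Cubic K := ⟨a, b, c, d⟩
  have hdeg : P.toPoly.degree ≠ 0 := by
    by_cases ha : a = 0
    · by_cases hb : b = 0
      · rw [Cubic.degree_of_c_ne_zero (P := P) ha hb (by tauto)]
        decide
      · rw [Cubic.degree_of_b_ne_zero (P := P) ha hb]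
        decide
    · rw [Cubic.degree_of_a_ne_zero (P := P) ha]
      decide
  obtain ⟨t, ht⟩ := IsAlgClosed.exists_root P.toPoly hdeg
  exact ⟨t, by simpa [P, Cubic.toPoly] using ht⟩

theorem exists_quadratic_factorization {K : Type*} [Field K] [IsAlgClosed K] (p q r : K) :
    ∃ a b c d : K, a * b = p ∧ a * d + b * c = q ∧ c * d = r := by
  by_cases hp : p = 0
  · exact ⟨0, q, 1, r, by simp [hp], by ring, by ring⟩
  obtain ⟨s, hs⟩ := exists_cubic_eq_zero (a := 0) (b := p) (c := q) r (by simp [hp])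
  exact ⟨1, p, -s, q + p * s, by ring, by ring, by linear_combination -hs⟩

def wordWeight (i : Fin 3 → Fin 2) : Fin 4 :=
  ⟨(i 0 : ℕ) + i 1 + i 2, by omega⟩

theorem wordWeight_surjective : Function.Surjective wordWeight := by
  decide

def cubicTraces {n R : Type*} [Fintype n] [Semiring R] (A B : Matrix n n R) : Fin 4 → R :=
  ![trace (A * A * A), trace (A * A * B), trace (A * B * B), trace (B * B * B)]

theorem trace_mul_mul_eq_cubicTraces {n R : Type*} [Fintype n] [CommSemiring R]
    (M : Fin 2 → Matrix n n R) (i : Fin 3 → Fin 2) :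
    trace (M (i 0) * M (i 1) * M (i 2)) = cubicTraces (M 0) (M 1) (wordWeight i) := by
  have hABA := trace_mul_cycle (M 0) (M 1) (M 0)
  have hBAA := trace_mul_cycle (M 1) (M 0) (M 0)
  have hBAB := trace_mul_cycle (M 1) (M 0) (M 1)
  have hBBA := trace_mul_cycle (M 1) (M 1) (M 0)
  obtain ⟨j, k, l, rfl⟩ : ∃ j k l, i = ![j, k, l] := ⟨i 0, i 1, i 2, by ext m; fin_cases m <;> rfl⟩
  fin_cases j <;> fin_cases k <;> fin_cases l <;>
    simp [wordWeight, cubicTraces, hABA, hBAA, hBAB, hBBA]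

theorem cubicTraces_fin_two {R : Type*} [CommRing R] (s a b t c d : R) :
    cubicTraces !![s, a; b, 0] !![t, c; d, 0] =
      ![s ^ 3 + 3 * s * (a * b), s ^ 2 * t + a * b * t + s * (a * d + b * c),
        s * t ^ 2 + t * (a * d + b * c) + s * (c * d), t ^ 3 + 3 * t * (c * d)] := by
  ext k
  fin_cases k <;> simp [cubicTraces, trace_fin_two] <;> ring

theorem exists_cubicTraces_eq {K : Type*} [Field K] [IsAlgClosed K] (h3 : (3 : K) ≠ 0)
    (v : Fin 4 → K) : ∃ A B : Matrix (Fin 2) (Fin 2) K, cubicTraces A B = v := by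
  obtain ⟨w, x, y, z, rfl⟩ : ∃ w x y z, v = ![w, x, y, z] :=
    ⟨v 0, v 1, v 2, v 3, by ext k; fin_cases k <;> rfl⟩
  by_cases hzero : w = 0 ∧ x = 0 ∧ y = 0
  · obtain ⟨rfl, rfl, rfl⟩ := hzero
    obtain ⟨q, hq⟩ : ∃ q, 3 * q = z - 1 := ⟨(z - 1) / 3, mul_div_cancel₀ _ h3⟩
    refine ⟨!![0, 0; 0, 0], !![1, 1; q, 0], ?_⟩
    simp only [cubicTraces_fin_two, vecCons_inj, and_true]
    refine ⟨by ring, by ring, by ring, by linear_combination hq⟩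
  obtain ⟨t, ht⟩ := exists_cubic_eq_zero (a := w) (b := -3 * x) (c := 3 * y) (-z) (by
    simp only [ne_eq, neg_mul, neg_eq_zero, mul_eq_zero, h3, false_or]; tauto)
  obtain ⟨q, hq⟩ : ∃ q, 3 * q = w - 1 := ⟨(w - 1) / 3, mul_div_cancel₀ _ h3⟩
  obtain ⟨a, b, c, d, hab, hadbc, hcd⟩ :=
    exists_quadratic_factorization q (x - t - t * q) (y - t ^ 2 - t * (x - t - t * q))
  refine ⟨!![1, a; b, 0], !![t, c; d, 0], ?_⟩
  simp only [cubicTraces_fin_two, vecCons_inj, and_true]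
  refine ⟨?_, ?_, ?_, ?_⟩
  · linear_combination 3 * hab + hq
  · linear_combination hadbc + t * hab
  · linear_combination hcd + t * hadbc
  · linear_combination 3 * t * hcd + ht + t ^ 3 * hq

/-- The tensors depending only on the number of indices equal to `1`, i.e. the symmetric ones. -/
def symTensors (R : Type*) [Semiring R] : Submodule R ((Fin 3 → Fin 2) → R) :=
  LinearMap.range (LinearMap.funLeft R R wordWeight)

theorem finrank_symTensors (K : Type*) [Field K] : Module.finrank K (symTensors K) = 4 := by
  rw [symTensors, LinearMap.finrank_range_of_inj
    (LinearMap.funLeft_injective_of_surjective _ _ _ wordWeight_surjective), Module.finrank_fin_fun]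

theorem coe_symTensors {K : Type*} [Field K] [IsAlgClosed K] (h3 : (3 : K) ≠ 0) :
    (symTensors K : Set ((Fin 3 → Fin 2) → K)) =
      {T | ∃ M : Fin 2 → Matrix (Fin 2) (Fin 2) K,
        ∀ i : Fin 3 → Fin 2, T i = trace (M (i 0) * M (i 1) * M (i 2))} := by
  ext T
  constructor
  · rintro ⟨v, rfl⟩
    obtain ⟨A, B, hAB⟩ := exists_cubicTraces_eq h3 v
    refine ⟨![A, B], fun i => ?_⟩
    simpa [hAB] using (trace_mul_mul_eq_cubicTraces ![A, B] i).symm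
  · rintro ⟨M, hM⟩
    exact ⟨cubicTraces (M 0) (M 1), funext fun i => by rw [hM, trace_mul_mul_eq_cubicTraces]; rfl⟩

/-- Section 5.2 (corollary): `IMPS(2,2,3)` is a closed subset of the tensor space
`(Fin 3 → Fin 2) → ℂ`; indeed it is a 4-dimensional linear subspace (the space of
symmetric tensors). -/
theorem imps_two_two_three_isClosed :
    IsClosed {T : (Fin 3 → Fin 2) → ℂ |
      ∃ M : Fin 2 → Matrix (Fin 2) (Fin 2) ℂ,
        ∀ i : Fin 3 → Fin 2, T i = Matrix.trace (M (i 0) * M (i 1) * M (i 2))} ∧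
    ∃ U : Submodule ℂ ((Fin 3 → Fin 2) → ℂ),
      (U : Set ((Fin 3 → Fin 2) → ℂ)) =
        {T : (Fin 3 → Fin 2) → ℂ |
          ∃ M : Fin 2 → Matrix (Fin 2) (Fin 2) ℂ,
            ∀ i : Fin 3 → Fin 2, T i = Matrix.trace (M (i 0) * M (i 1) * M (i 2))} ∧
      Module.finrank ℂ U = 4 := by
  have hU := coe_symTensors (K := ℂ) three_ne_zero
  exact ⟨hU ▸ (symTensors ℂ).closed_of_finiteDimensional, symTensors ℂ, hU, finrank_symTensors ℂ⟩
end

section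
/- Proposition (Section 5.1, Cavender–Farris–Neyman model): Let φ : ℂ⁶ → ℂ⁸ be the polynomial map (a,b,c,d,e,f) ↦ (ace+bdf, acf+bde, ade+bcf, bce+adf, bde+acf, bcf+ade, adf+bce, bdf+ace). Then the closure of the image of φ (in the standard topology on ℂ⁸, equivalently the Zariski closure) is the 4-dimensional linear subspace {(y_0,…,y_7) ∈ ℂ⁸ : y_3 = y_6, y_2 = y_5, y_1 = y_4, y_0 = y_7}. -/
/-!
In the Fourier coordinates `p + q + r + s, p + q - r - s, p - q + r - s, p - q - r + s` of
`(p, q, r, s, q, r, s, p)`, the map `cfnMap` becomes a monomial map of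
`a ± b, c ± d, e ± f`, which hits every point of the subspace whose four Fourier coordinates are
nonzero. Translating the first and last coordinate by `t` shifts all four Fourier coordinates by
`t`, so any point of the subspace is a limit of such points.
-/

/-- The parametrization of the Cavender–Farris–Neyman (2-state Jukes–Cantor) model
for the tripod: `(a,b,c,d,e,f) ↦ (ace+bdf, acf+bde, ade+bcf, bce+adf, bde+acf,
bcf+ade, adf+bce, bdf+ace)`. -/
def cfnMap (x : Fin 6 → ℂ) : Fin 8 → ℂ :=
  let a := x 0; let b := x 1; let c := x 2; let d := x 3; let e := x 4; let f := x 5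
  ![a * c * e + b * d * f, a * c * f + b * d * e,
    a * d * e + b * c * f, b * c * e + a * d * f,
    b * d * e + a * c * f, b * c * f + a * d * e,
    a * d * f + b * c * e, b * d * f + a * c * e]

theorem Continuous.mem_closure_of_mapsTo_compl_countable {𝕜 X : Type*}
    [NontriviallyNormedField 𝕜] [CompleteSpace 𝕜] [TopologicalSpace X] {f : 𝕜 → X}
    (hf : Continuous f) {B : Set 𝕜} (hB : B.Countable) {S : Set X} (hS : Set.MapsTo f Bᶜ S)
    (t : 𝕜) : f t ∈ closure S :=
  closure_mono hS.image_subset (hf.range_subset_closure_image_dense (hB.dense_compl 𝕜) ⟨t, rfl⟩)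

def cfnSpace : Set (Fin 8 → ℂ) := {y | y 3 = y 6 ∧ y 2 = y 5 ∧ y 1 = y 4 ∧ y 0 = y 7}

theorem cfnMap_mem_cfnSpace (x : Fin 6 → ℂ) : cfnMap x ∈ cfnSpace :=
  ⟨add_comm _ _, add_comm _ _, add_comm _ _, add_comm _ _⟩

theorem isClosed_cfnSpace : IsClosed cfnSpace :=
  (isClosed_eq (continuous_apply 3) (continuous_apply 6)).inter <|
    (isClosed_eq (continuous_apply 2) (continuous_apply 5)).inter <|
      (isClosed_eq (continuous_apply 1) (continuous_apply 4)).inter <|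
        isClosed_eq (continuous_apply 0) (continuous_apply 7)

theorem eq_of_mem_cfnSpace {y : Fin 8 → ℂ} (hy : y ∈ cfnSpace) :
    y = ![y 0, y 1, y 2, y 3, y 1, y 2, y 3, y 0] := by
  obtain ⟨h36, h25, h14, h07⟩ := hy
  ext i
  fin_cases i <;> simp [h36, h25, h14, h07]

/- With `A = a + b, A' = a - b, C = c + d, C' = c - d, E = e + f, E' = e - f`, the Fourier
coordinates of `cfnMap` are `ACE, A'C'E, A'CE', AC'E'`. The witness takes `A = p + q + r + s`,
`A' = z` and `C = E = 1`. -/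
theorem exists_cfnMap_eq (p q r s : ℂ) (h₀ : p + q + r + s ≠ 0) (h₁ : p + q - r - s ≠ 0)
    (h₂ : p - q + r - s ≠ 0) (h₃ : p - q - r + s ≠ 0) :
    ∃ x, cfnMap x = ![p, q, r, s, q, r, s, p] := by
  obtain ⟨z, hz⟩ := IsAlgClosed.exists_pow_nat_eq
    ((p + q + r + s) * (p + q - r - s) * (p - q + r - s) / (p - q - r + s)) two_pos
  have hz₀ : z ≠ 0 := by
    rintro rfl
    simp [h₀, h₁, h₂, h₃, eq_comm] at hz
  have hz₂ : z ^ 2 * (p - q - r + s) = (p + q + r + s) * (p + q - r - s) * (p - q + r - s) := by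
    rw [hz, div_mul_cancel₀ _ h₃]
  refine ⟨![(p + q + r + s + z) / 2, (p + q + r + s - z) / 2, (1 + (p + q - r - s) / z) / 2,
    (1 - (p + q - r - s) / z) / 2, (1 + (p - q + r - s) / z) / 2, (1 - (p - q + r - s) / z) / 2],
    ?_⟩
  ext i
  fin_cases i <;> simp only [cfnMap, Fin.isValue, Matrix.cons_val_zero, Matrix.cons_val,
    Matrix.cons_val_one, Fin.zero_eta, Fin.mk_one, Fin.reduceFinMk] <;> grind

theorem mem_closure_range_cfnMap (p q r s : ℂ) :
    ![p, q, r, s, q, r, s, p] ∈ closure (Set.range cfnMap) := by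
  have hf : Continuous fun t : ℂ ↦ ![p + t, q, r, s, q, r, s, p + t] := by fun_prop
  have hclosure := hf.mem_closure_of_mapsTo_compl_countable (S := Set.range cfnMap)
    (Set.toFinite
      {-(p + q + r + s), -(p + q - r - s), -(p - q + r - s), -(p - q - r + s)}).countable ?_ 0
  · simpa using hclosure
  intro t ht
  simp only [Set.mem_compl_iff, Set.mem_insert_iff, Set.mem_singleton_iff, not_or] at ht
  obtain ⟨h₀, h₁, h₂, h₃⟩ := ht
  exact exists_cfnMap_eq (p + t) q r s (fun h ↦ h₀ (by linear_combination h))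
    (fun h ↦ h₁ (by linear_combination h)) (fun h ↦ h₂ (by linear_combination h))
    (fun h ↦ h₃ (by linear_combination h))

/-- Section 5.1 (Cavender–Farris–Neyman model): the closure of the image of the
CFN parametrization `φ : ℂ⁶ → ℂ⁸` is the 4-dimensional linear subspace
`{y ∈ ℂ⁸ : y₃ = y₆, y₂ = y₅, y₁ = y₄, y₀ = y₇}`. -/
theorem closure_image_cfnMap :
    closure (Set.range cfnMap) =
      {y : Fin 8 → ℂ | y 3 = y 6 ∧ y 2 = y 5 ∧ y 1 = y 4 ∧ y 0 = y 7} := by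
  show closure _ = cfnSpace
  refine subset_antisymm
    (closure_minimal (Set.range_subset_iff.2 cfnMap_mem_cfnSpace) isClosed_cfnSpace) ?_
  intro y hy
  rw [eq_of_mem_cfnSpace hy]
  exact mem_closure_range_cfnMap _ _ _ _
end
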